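/- Let T > 0 and let (α, β) : [0, T] → ℝ² be differentiable with α'(t) = 4 − α(t)² and β'(t) = 1 − α(t)β(t) + β(t)² for all t ∈ [0, T]. If α(t) ∈ (−2, 2) for all t ∈ [0, T] and α(0) > 2β(0), then α(t) > 2β(t) for all t ∈ [0, T]. -/

import Mathlib

/-! The gap `w = α − 2β` satisfies `w' = ½(4 − α² − w²)`, which is positive wherever `w`
vanishes as long as `|α| < 2`. A function whose derivative is positive at each of its zeros can
only cross zero upwards: `{w ≥ 0}` is closed and, starting from `w ≥ 0`, it spreads to the right,
so `w ≥ 0` throughout; and a zero `t > 0` is impossible, since `w` would be negative just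
before `t`. -/

open Set Filter Topology

section SignNearZero

variable {f : ℝ → ℝ} {x₀ : ℝ}

lemma eventually_pos_nhdsGT_of_deriv_pos (hf : 0 < deriv f x₀) (hx : f x₀ = 0) :
    ∀ᶠ x in 𝓝[>] x₀, 0 < f x := by
  filter_upwards [nhdsWithin_le_nhds (eventually_nhdsWithin_sign_eq_of_deriv_pos hf hx),
    self_mem_nhdsWithin] with x hsign hx₀
  rw [sign_pos (sub_pos.mpr hx₀), sign_eq_one_iff] at hsign
  exact hsign

lemma eventually_neg_nhdsLT_of_deriv_pos (hf : 0 < deriv f x₀) (hx : f x₀ = 0) :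
    ∀ᶠ x in 𝓝[<] x₀, f x < 0 := by
  filter_upwards [nhdsWithin_le_nhds (eventually_nhdsWithin_sign_eq_of_deriv_pos hf hx),
    self_mem_nhdsWithin] with x hsign hx₀
  rw [sign_neg (sub_neg.mpr hx₀), sign_eq_neg_one_iff] at hsign
  exact hsign

end SignNearZero

theorem pos_on_Icc_of_deriv_pos_at_zeros {w w' : ℝ → ℝ} {a b : ℝ}
    (hw : ∀ t ∈ Icc a b, HasDerivAt w (w' t) t) (hzero : ∀ t ∈ Icc a b, w t = 0 → 0 < w' t)
    (ha : 0 < w a) : ∀ t ∈ Icc a b, 0 < w t := by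
  have hderiv_pos : ∀ t ∈ Icc a b, w t = 0 → 0 < deriv w t := fun t ht h0 ↦
    (hw t ht).deriv ▸ hzero t ht h0
  have hnonneg : Icc a b ⊆ {t | 0 ≤ w t} := by
    have hclosed : IsClosed ({t | 0 ≤ w t} ∩ Icc a b) := by
      rw [inter_comm]
      exact (HasDerivAt.continuousOn hw).preimage_isClosed_of_isClosed isClosed_Icc isClosed_Ici
    refine hclosed.Icc_subset_of_forall_mem_nhdsWithin ha.le fun x ⟨hx, hxab⟩ ↦ ?_
    have hxab := Ico_subset_Icc_self hxab
    rcases (show 0 ≤ w x from hx).eq_or_lt with h0 | hpos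
    · exact (eventually_pos_nhdsGT_of_deriv_pos (hderiv_pos x hxab h0.symm) h0.symm).mono
        fun _ ↦ le_of_lt
    · exact nhdsWithin_le_nhds <| ((hw x hxab).continuousAt.eventually
        (eventually_gt_nhds hpos)).mono fun _ ↦ le_of_lt
  intro t ht
  refine (hnonneg ht).lt_of_ne fun h0 ↦ ?_
  have hat : a < t := ht.1.lt_of_ne (by rintro rfl; exact ha.ne h0)
  obtain ⟨s, hs, hsat⟩ := ((eventually_neg_nhdsLT_of_deriv_pos (hderiv_pos t ht h0.symm)
    h0.symm).and (Ioo_mem_nhdsLT hat)).exists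
  exact (hnonneg ⟨hsat.1.le, hsat.2.le.trans ht.2⟩).not_gt hs

theorem stmt_11 (T : ℝ) (α β : ℝ → ℝ)
    (hα : ∀ t ∈ Set.Icc (0 : ℝ) T, HasDerivAt α (4 - α t ^ 2) t)
    (hβ : ∀ t ∈ Set.Icc (0 : ℝ) T, HasDerivAt β (1 - α t * β t + β t ^ 2) t)
    (hrange : ∀ t ∈ Set.Icc (0 : ℝ) T, α t ∈ Set.Ioo (-2 : ℝ) 2)
    (h0 : 2 * β 0 < α 0) :
    ∀ t ∈ Set.Icc (0 : ℝ) T, 2 * β t < α t := by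
  have hgap := pos_on_Icc_of_deriv_pos_at_zeros (w := fun t ↦ α t - 2 * β t)
    (w' := fun t ↦ (4 - α t ^ 2 - (α t - 2 * β t) ^ 2) / 2)
    (fun t ht ↦ ((hα t ht).sub ((hβ t ht).const_mul 2)).congr_deriv (by ring))
    (fun t ht hgap0 ↦ by
      obtain ⟨hlo, hhi⟩ := hrange t ht
      simp only [hgap0]
      nlinarith)
    (by simpa using h0)
  exact fun t ht ↦ by simpa using hgap t ht
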